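/- arXiv:1805.01016 — 2 statements merged into one kernel-verified Lean document; each statement's English description precedes it below -/
import Mathlib

section
/- If K is a local field (i.e. its closed unit ball K° is compact), then every closed bounded subset of the space of norms N(V) with the Goldman–Iwahori metric is compact. -/
open Filter Real Set

def IsVNorm (K : Type*) [NormedField K] {V : Type*} [AddCommGroup V] [Module K V]
    (f : V → ℝ) : Prop :=
  (∀ v, 0 ≤ f v) ∧ (∀ (a : K) (v : V), f (a • v) = ‖a‖ * f v) ∧
    (∀ v w, f (v + w) ≤ f v + f w) ∧ ∀ v, f v = 0 → v = 0

noncomputable def dGI {V : Type*} [AddCommGroup V] (f g : V → ℝ) : ℝ :=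
  ⨆ v : {v : V // v ≠ 0}, |Real.log (f v) - Real.log (g v)|

section helpers
variable {K : Type*} [NormedField K] {V : Type*} [AddCommGroup V] [Module K V] {f : V → ℝ}

theorem IsVNorm.zero (hf : IsVNorm K f) : f 0 = 0 := by
  have := hf.2.1 (0 : K) 0
  simpa using this

theorem IsVNorm.pos (hf : IsVNorm K f) {v : V} (hv : v ≠ 0) : 0 < f v :=
  (hf.1 v).lt_of_ne fun h => hv (hf.2.2.2 v h.symm)

theorem IsVNorm.negv (hf : IsVNorm K f) (v : V) : f (-v) = f v := by
  have := hf.2.1 (-1 : K) v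
  simpa using this

theorem IsVNorm.abs_sub_le (hf : IsVNorm K f) (v w : V) : |f v - f w| ≤ f (v - w) := by
  rw [abs_sub_le_iff]
  constructor
  · have h1 : f v ≤ f (v - w) + f w := by
      have := hf.2.2.1 (v - w) w
      simpa using this
    linarith
  · have h2 : f w ≤ f (w - v) + f v := by
      have := hf.2.2.1 (w - v) v
      simpa using this
    have h3 : f (w - v) = f (v - w) := by
      rw [(neg_sub v w).symm, hf.negv (K := K)]
    linarith

theorem abs_log_sub_log_le {δ x y : ℝ} (hδ : 0 < δ) (hx : δ ≤ x) (hy : δ ≤ y) :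
    |Real.log x - Real.log y| ≤ |x - y| / δ := by
  have key : ∀ p q : ℝ, δ ≤ p → δ ≤ q → q ≤ p → Real.log p - Real.log q ≤ |p - q| / δ := by
    intro p q hp hq hqp
    have hq0 : 0 < q := hδ.trans_le hq
    have hp0 : 0 < p := hδ.trans_le hp
    have h1 : Real.log p - Real.log q = Real.log (p / q) := (Real.log_div hp0.ne' hq0.ne').symm
    have h2 : Real.log (p / q) ≤ p / q - 1 := Real.log_le_sub_one_of_pos (by positivity)
    have h3 : p / q - 1 = (p - q) / q := by field_simp
    have h4 : (p - q) / q ≤ (p - q) / δ :=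
      div_le_div_of_nonneg_left (by linarith) hδ hq
    have h5 : (p - q) / δ ≤ |p - q| / δ := by gcongr; exact le_abs_self _
    linarith
  rcases le_total y x with h | h
  · rw [abs_of_nonneg (by have := Real.log_le_log (hδ.trans_le hy) h; linarith)]
    exact key x y hx hy h
  · rw [abs_of_nonpos (by have := Real.log_le_log (hδ.trans_le hx) h; linarith)]
    have := key y x hy hx h
    rw [abs_sub_comm] at this
    linarith

theorem le_exp_mul_of_log_sub_le {x y c : ℝ} (hx : 0 < x) (hy : 0 < y)
    (h : Real.log x - Real.log y ≤ c) : x ≤ Real.exp c * y := by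
  have : x = Real.exp (Real.log x) := (Real.exp_log hx).symm
  rw [this]
  calc Real.exp (Real.log x) ≤ Real.exp (c + Real.log y) := by
        apply Real.exp_le_exp.2; linarith
    _ = Real.exp c * y := by rw [Real.exp_add, Real.exp_log hy]

theorem limit_is_norm {F : ℕ → V → ℝ} (hF : ∀ k, IsVNorm K (F k)) {g : V → ℝ}
    (htend : ∀ v, Tendsto (fun k => F k v) atTop (nhds (g v)))
    (hpos : ∀ v : V, v ≠ 0 → 0 < g v) : IsVNorm K g := by
  refine ⟨fun v => ge_of_tendsto (htend v) (Eventually.of_forall fun k => (hF k).1 v), ?_, ?_, ?_⟩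
  · intro a v
    refine tendsto_nhds_unique (htend (a • v)) ?_
    have : (fun k => F k (a • v)) = fun k => ‖a‖ * F k v := by
      funext k; exact (hF k).2.1 a v
    rw [this]
    exact (htend v).const_mul _
  · intro v w
    exact le_of_tendsto_of_tendsto' (htend (v + w)) ((htend v).add (htend w))
      fun k => (hF k).2.2.1 v w
  · intro v hv
    by_contra h
    exact absurd hv (hpos v h).ne'

theorem conclude (S : Set (V → ℝ)) (hS : ∀ f ∈ S, IsVNorm K f)
    (hclosed : ∀ g : V → ℝ, IsVNorm K g →
      (∀ ε : ℝ, 0 < ε → ∃ f ∈ S, dGI f g < ε) → g ∈ S)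
    (F : ℕ → V → ℝ) (hF : ∀ n, F n ∈ S) (φ : ℕ → ℕ) (hφ : StrictMono φ) (g : V → ℝ)
    (htend : ∀ v, Tendsto (fun k => F (φ k) v) atTop (nhds (g v)))
    (hpos : ∀ v : V, v ≠ 0 → 0 < g v)
    (hdGI : Tendsto (fun k => dGI (F (φ k)) g) atTop (nhds 0)) :
    ∃ g ∈ S, ∃ ψ : ℕ → ℕ, StrictMono ψ ∧
      Tendsto (fun n => dGI (F (ψ n)) g) atTop (nhds 0) := by
  have gnorm : IsVNorm K g := limit_is_norm (fun k => hS _ (hF _)) htend hpos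
  refine ⟨g, hclosed g gnorm ?_, φ, hφ, hdGI⟩
  intro ε hε
  obtain ⟨k, hk⟩ := (hdGI.eventually_lt_const hε).exists
  exact ⟨F (φ k), hF _, hk⟩

end helpers

theorem main_case {K : Type*} [NormedField K] [CompleteSpace K]
    {V : Type*} [AddCommGroup V] [Module K V] [FiniteDimensional K V]
    (hK : IsCompact {x : K | ‖x‖ ≤ 1}) (c : K) (hc : 1 < ‖c‖)
    (S : Set (V → ℝ)) (hS : ∀ f ∈ S, IsVNorm K f) (f₀ : V → ℝ) (hf₀ : IsVNorm K f₀) (C : ℝ)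
    (hbdd : ∀ f ∈ S, dGI f f₀ ≤ C)
    (hclosed : ∀ g : V → ℝ, IsVNorm K g →
      (∀ ε : ℝ, 0 < ε → ∃ f ∈ S, dGI f g < ε) → g ∈ S)
    (F : ℕ → V → ℝ) (hF : ∀ n, F n ∈ S) (v₀ : V) (hv₀ : v₀ ≠ 0) :
    ∃ g ∈ S, ∃ ψ : ℕ → ℕ, StrictMono ψ ∧
      Tendsto (fun n => dGI (F (ψ n)) g) atTop (nhds 0) := by
  classical
  haveI : Nonempty {v : V // v ≠ 0} := ⟨⟨v₀, hv₀⟩⟩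
  have hc0 : (0:ℝ) < ‖c‖ := lt_trans one_pos hc
  have hcne : c ≠ 0 := by
    intro h; rw [h, norm_zero] at hc; linarith
  letI : NontriviallyNormedField K := { ‹NormedField K› with non_trivial := ⟨c, hc⟩ }
  set b := Module.finBasis K V with hb
  letI : NormedAddCommGroup V := AddGroupNorm.toNormedAddCommGroup
    { toFun := fun v => ‖b.equivFun v‖
      map_zero' := by simp
      add_le' := by intro v w; simp only [map_add]; exact norm_add_le _ _
      neg' := by intro v; simp
      eq_zero_of_map_eq_zero' := by
        intro v h
        have h2 : b.equivFun v = 0 := norm_eq_zero.mp h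
        have := b.equivFun.injective (a₁ := v) (a₂ := 0)
        simp only [map_zero] at this
        exact this h2 }
  have hnorm : ∀ v : V, ‖v‖ = ‖b.equivFun v‖ := fun v => rfl
  letI : NormedSpace K V := ⟨fun a v => by
    rw [hnorm, hnorm, map_smul, norm_smul]⟩
  -- Proper space instances
  have hcb : IsCompact (Metric.closedBall (0:K) 1) := by
    convert hK using 1
    ext x; simp [Metric.mem_closedBall, dist_zero_right]
  haveI hwlc : WeaklyLocallyCompactSpace K := by
    refine ⟨fun x => ⟨Metric.closedBall x 1, ?_, Metric.closedBall_mem_nhds x one_pos⟩⟩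
    have himg : (fun y => x + y) '' Metric.closedBall (0:K) 1 = Metric.closedBall x 1 := by
      ext y
      simp only [Set.mem_image, Metric.mem_closedBall, dist_zero_right, dist_eq_norm]
      constructor
      · rintro ⟨z, hz, rfl⟩; simpa [add_sub_cancel_left] using hz
      · intro hy; exact ⟨y - x, by simpa [norm_sub_rev] using hy, by ring⟩
    rw [← himg]
    exact hcb.image (continuous_const.add continuous_id)
  haveI hpk : ProperSpace K := @ProperSpace.of_nontriviallyNormedField_of_weaklyLocallyCompactSpace K _ hwlc
  haveI : LocallyCompactSpace K := @locallyCompact_of_proper K _ hpk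
  haveI : ProperSpace V := FiniteDimensional.proper K V
  -- upper bounds for norms
  have hsum : ∀ (f : V → ℝ), IsVNorm K f → ∀ (s : Finset (Fin (Module.finrank K V)))
      (u : Fin (Module.finrank K V) → V), f (∑ i ∈ s, u i) ≤ ∑ i ∈ s, f (u i) := by
    intro f hf s u
    induction s using Finset.induction_on with
    | empty => simp [hf.zero]
    | insert a s hnot ih =>
      rw [Finset.sum_insert hnot, Finset.sum_insert hnot]
      exact le_trans (hf.2.2.1 _ _) (by linarith)
  have hupper : ∀ f : V → ℝ, IsVNorm K f → ∃ M : ℝ, 0 < M ∧ ∀ v, f v ≤ M * ‖v‖ := by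
    intro f hf
    have hsnn : 0 ≤ ∑ i, f (b i) := Finset.sum_nonneg fun i _ => hf.1 _
    refine ⟨(∑ i, f (b i)) + 1, by linarith, ?_⟩
    intro v
    have hv : v = ∑ i, b.equivFun v i • b i := (b.sum_equivFun v).symm
    calc f v = f (∑ i, b.equivFun v i • b i) := by rw [← hv]
      _ ≤ ∑ i, f (b.equivFun v i • b i) := hsum f hf _ _
      _ = ∑ i, ‖b.equivFun v i‖ * f (b i) := by
          refine Finset.sum_congr rfl fun i _ => hf.2.1 _ _
      _ ≤ ∑ i, ‖v‖ * f (b i) := by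
          refine Finset.sum_le_sum fun i _ => ?_
          exact mul_le_mul_of_nonneg_right (by rw [hnorm]; exact norm_le_pi_norm _ i) (hf.1 _)
      _ = (∑ i, f (b i)) * ‖v‖ := by rw [← Finset.mul_sum, mul_comm]
      _ ≤ ((∑ i, f (b i)) + 1) * ‖v‖ := by
          exact mul_le_mul_of_nonneg_right (by linarith) (norm_nonneg v)
  have hlip : ∀ f : V → ℝ, IsVNorm K f → Continuous f := by
    intro f hf
    obtain ⟨M, hM, hMb⟩ := hupper f hf
    refine (LipschitzWith.of_dist_le_mul (K := M.toNNReal) (f := f) ?_).continuous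
    intro v w
    rw [Real.dist_eq, dist_eq_norm, Real.coe_toNNReal _ hM.le]
    exact le_trans (hf.abs_sub_le v w) (hMb _)
  have hscale : ∀ v : V, v ≠ 0 → ∃ a : K, a ≠ 0 ∧ ‖c‖⁻¹ < ‖a • v‖ ∧ ‖a • v‖ ≤ 1 := by
    intro v hv
    have ht : (0:ℝ) < ‖v‖ := norm_pos_iff.2 hv
    obtain ⟨k, hk1, hk2⟩ := exists_mem_Ico_zpow (x := ‖v‖⁻¹) (y := ‖c‖) (inv_pos.2 ht) hc
    refine ⟨c ^ k, zpow_ne_zero k hcne, ?_, ?_⟩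
    · rw [norm_smul, norm_zpow]
      have he : ‖c‖ ^ (k+1) = ‖c‖ ^ k * ‖c‖ := zpow_add_one₀ hc0.ne' k
      rw [he] at hk2
      have h1 : ‖v‖⁻¹ * ‖v‖ < ‖c‖ ^ k * ‖c‖ * ‖v‖ := mul_lt_mul_of_pos_right hk2 ht
      rw [inv_mul_cancel₀ ht.ne'] at h1
      have h2 : (0:ℝ) < ‖c‖⁻¹ := inv_pos.2 hc0
      have h3 : ‖c‖⁻¹ * (‖c‖ ^ k * ‖c‖ * ‖v‖) = ‖c‖ ^ k * ‖v‖ := by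
        field_simp
      have h4 := mul_lt_mul_of_pos_left h1 h2
      rw [mul_one, h3] at h4
      exact h4
    · rw [norm_smul, norm_zpow]
      have h1 : ‖c‖ ^ k * ‖v‖ ≤ ‖v‖⁻¹ * ‖v‖ := mul_le_mul_of_nonneg_right hk1 ht.le
      rwa [inv_mul_cancel₀ ht.ne'] at h1
  set A : Set V := {w : V | ‖c‖⁻¹ ≤ ‖w‖ ∧ ‖w‖ ≤ 1} with hA
  have hAcl : IsClosed A := by
    have : A = {w : V | ‖c‖⁻¹ ≤ ‖w‖} ∩ {w : V | ‖w‖ ≤ 1} := rfl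
    rw [this]
    exact (isClosed_le continuous_const continuous_norm).inter
      (isClosed_le continuous_norm continuous_const)
  have hAsub : A ⊆ Metric.closedBall (0:V) 1 := fun w hw => mem_closedBall_zero_iff.2 hw.2
  have hAcpt : IsCompact A :=
    (isCompact_closedBall (0:V) 1).of_isClosed_subset hAcl hAsub
  have hAne : A.Nonempty := by
    obtain ⟨a, ha0, h1, h2⟩ := hscale v₀ hv₀
    exact ⟨a • v₀, ⟨h1.le, h2⟩⟩
  have hlower : ∀ f : V → ℝ, IsVNorm K f → ∃ m : ℝ, 0 < m ∧ ∀ v, m * ‖v‖ ≤ f v := by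
    intro f hf
    obtain ⟨w₀, hw₀A, hmin⟩ := hAcpt.exists_isMinOn hAne (hlip f hf).continuousOn
    have hw₀0 : w₀ ≠ 0 := by
      intro h
      have := hw₀A.1
      rw [h, norm_zero] at this
      exact absurd this (not_le.2 (inv_pos.2 hc0))
    refine ⟨f w₀, hf.pos hw₀0, ?_⟩
    intro v
    rcases eq_or_ne v 0 with rfl | hv
    · simp [hf.zero (K := K)]
    · obtain ⟨a, ha0, h1, h2⟩ := hscale v hv
      have hwA : a • v ∈ A := ⟨h1.le, h2⟩
      have hmin' : f w₀ ≤ f (a • v) := (isMinOn_iff.mp hmin) _ hwA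
      rw [hf.2.1 a v] at hmin'
      have hnv : ‖a‖ * ‖v‖ ≤ 1 := by rw [← norm_smul]; exact h2
      have hna : (0:ℝ) < ‖a‖ := norm_pos_iff.2 ha0
      nlinarith [mul_le_mul_of_nonneg_right hmin' (norm_nonneg v),
        mul_le_mul_of_nonneg_left hnv (hf.1 v), hf.1 v]
  have hpair : ∀ p q : V → ℝ, IsVNorm K p → IsVNorm K q →
      BddAbove (Set.range fun v : {v : V // v ≠ 0} =>
        |Real.log (p v.1) - Real.log (q v.1)|) := by
    intro p q hp hq
    obtain ⟨Mp, hMp, hMpb⟩ := hupper p hp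
    obtain ⟨mp, hmp, hmpb⟩ := hlower p hp
    obtain ⟨Mq, hMq, hMqb⟩ := hupper q hq
    obtain ⟨mq, hmq, hmqb⟩ := hlower q hq
    refine ⟨(Real.log Mp - Real.log mq) ⊔ (Real.log Mq - Real.log mp), ?_⟩
    rintro y ⟨v, rfl⟩
    have hnv : (0:ℝ) < ‖v.1‖ := norm_pos_iff.2 v.2
    have hpv : 0 < p v.1 := hp.pos v.2
    have hqv : 0 < q v.1 := hq.pos v.2
    have h1 : Real.log (p v.1) ≤ Real.log Mp + Real.log ‖v.1‖ := by
      rw [← Real.log_mul hMp.ne' hnv.ne']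
      exact Real.log_le_log hpv (hMpb _)
    have h2 : Real.log mp + Real.log ‖v.1‖ ≤ Real.log (p v.1) := by
      rw [← Real.log_mul hmp.ne' hnv.ne']
      exact Real.log_le_log (by positivity) (hmpb _)
    have h3 : Real.log (q v.1) ≤ Real.log Mq + Real.log ‖v.1‖ := by
      rw [← Real.log_mul hMq.ne' hnv.ne']
      exact Real.log_le_log hqv (hMqb _)
    have h4 : Real.log mq + Real.log ‖v.1‖ ≤ Real.log (q v.1) := by
      rw [← Real.log_mul hmq.ne' hnv.ne']
      exact Real.log_le_log (by positivity) (hmqb _)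
    refine abs_sub_le_iff.2 ⟨?_, ?_⟩
    · exact le_trans (by linarith) (le_max_left _ _)
    · exact le_trans (by linarith) (le_max_right _ _)
  have hboundS : ∀ f ∈ S, ∀ v : V, v ≠ 0 →
      Real.exp (-C) * f₀ v ≤ f v ∧ f v ≤ Real.exp C * f₀ v := by
    intro f hf v hv
    have h := le_trans (le_ciSup (hpair f f₀ (hS f hf) hf₀) ⟨v, hv⟩) (hbdd f hf)
    have hfv : 0 < f v := (hS f hf).pos hv
    have hf₀v : 0 < f₀ v := hf₀.pos hv
    obtain ⟨ha, hb⟩ := abs_le.mp h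
    constructor
    · have h2 : f₀ v ≤ Real.exp C * f v := le_exp_mul_of_log_sub_le hf₀v hfv (by linarith)
      have h3 : Real.exp (-C) * f₀ v ≤ Real.exp (-C) * (Real.exp C * f v) :=
        mul_le_mul_of_nonneg_left h2 (Real.exp_pos _).le
      calc Real.exp (-C) * f₀ v ≤ Real.exp (-C) * (Real.exp C * f v) := h3
        _ = f v := by rw [← mul_assoc, ← Real.exp_add]; simp
    · exact le_exp_mul_of_log_sub_le hfv hf₀v hb
  obtain ⟨M₀, hM₀, hM₀b⟩ := hupper f₀ hf₀
  obtain ⟨m₀, hm₀, hm₀b⟩ := hlower f₀ hf₀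
  set L : ℝ := Real.exp C * M₀ with hL
  have hLpos : 0 < L := mul_pos (Real.exp_pos _) hM₀
  have hlipS : ∀ f ∈ S, ∀ v w : V, |f v - f w| ≤ L * ‖v - w‖ := by
    intro f hf v w
    rcases eq_or_ne v w with rfl | hvw
    · simp [hLpos.le]
    · have hsub : v - w ≠ 0 := sub_ne_zero.2 hvw
      have h1 : f (v - w) ≤ Real.exp C * f₀ (v - w) := (hboundS f hf _ hsub).2
      have h2 : f₀ (v - w) ≤ M₀ * ‖v - w‖ := hM₀b _
      have h3 := (hS f hf).abs_sub_le v w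
      calc |f v - f w| ≤ f (v - w) := h3
        _ ≤ Real.exp C * (M₀ * ‖v - w‖) := le_trans h1
            (mul_le_mul_of_nonneg_left h2 (Real.exp_pos _).le)
        _ = L * ‖v - w‖ := by rw [hL, mul_assoc]
  -- countable dense subset of the unit ball
  have hBcpt : IsCompact (Metric.closedBall (0:V) 1) := isCompact_closedBall _ _
  obtain ⟨T, hTc, hTsub⟩ := hBcpt.isSeparable
  have hTne : T.Nonempty := by
    by_contra h
    rw [Set.not_nonempty_iff_eq_empty] at h
    rw [h, closure_empty] at hTsub
    exact hTsub (Metric.mem_closedBall_self zero_le_one)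
  obtain ⟨u, hu⟩ := hTc.exists_eq_range hTne
  have hdense : ∀ w ∈ Metric.closedBall (0:V) 1, ∀ ε : ℝ, 0 < ε → ∃ i : ℕ, ‖w - u i‖ < ε := by
    intro w hw ε hε
    have hcl := hTsub hw
    rw [hu] at hcl
    obtain ⟨y, hy, hdy⟩ := Metric.mem_closure_iff.mp hcl ε hε
    obtain ⟨i, rfl⟩ := hy
    exact ⟨i, by rwa [dist_eq_norm] at hdy⟩
  -- diagonal extraction
  set R : ℕ → ℝ := fun i => Real.exp C * (M₀ * ‖u i‖) with hR
  have hmemQ : ∀ k, (fun i => F k (u i)) ∈ Set.pi Set.univ (fun i => Icc 0 (R i)) := by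
    intro k
    refine Set.mem_univ_pi.2 fun i => ⟨(hS _ (hF k)).1 _, ?_⟩
    rcases eq_or_ne (u i) 0 with h | h
    · rw [h, (hS _ (hF k)).zero (K := K)]
      rw [hR]
      simp [h]
    · refine le_trans (hboundS _ (hF k) _ h).2 ?_
      exact mul_le_mul_of_nonneg_left (hM₀b _) (Real.exp_pos _).le
  have hQcpt : IsCompact (Set.pi Set.univ (fun i : ℕ => Icc (0:ℝ) (R i))) :=
    isCompact_univ_pi fun i => isCompact_Icc
  obtain ⟨x, hx, φ, hφ, hconv⟩ := hQcpt.tendsto_subseq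
    (x := fun k => fun i => F k (u i)) hmemQ
  have hptU : ∀ i, Tendsto (fun k => F (φ k) (u i)) atTop (nhds (x i)) :=
    tendsto_pi_nhds.mp hconv
  -- uniform Cauchy on the closed unit ball
  have hUC : ∀ ε : ℝ, 0 < ε → ∃ N, ∀ k, N ≤ k → ∀ l, N ≤ l →
      ∀ w ∈ Metric.closedBall (0:V) 1, |F (φ k) w - F (φ l) w| ≤ ε := by
    intro ε hε
    set ε' : ℝ := ε / (2 * L + 1) with hε'
    have hε'pos : 0 < ε' := div_pos hε (by linarith)
    obtain ⟨t, ht⟩ := hBcpt.elim_finite_subcover (fun i : ℕ => Metric.ball (u i) ε')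
      (fun i => Metric.isOpen_ball) (by
        intro w hw
        obtain ⟨i, hi⟩ := hdense w hw ε' hε'pos
        exact Set.mem_iUnion.2 ⟨i, by rw [Metric.mem_ball, dist_eq_norm]; exact hi⟩)
    have habs : ∀ i : ℕ, Tendsto (fun k => |F (φ k) (u i) - x i|) atTop (nhds 0) := by
      intro i
      have h2 := ((hptU i).sub (tendsto_const_nhds (x := x i))).abs
      simpa using h2
    have hev : ∀ᶠ k in atTop, ∀ i ∈ t, |F (φ k) (u i) - x i| < ε' / 2 :=
      (eventually_all_finset t).2 fun i _ => (habs i).eventually_lt_const (by linarith)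
    obtain ⟨N, hN⟩ := eventually_atTop.mp hev
    refine ⟨N, fun k hk l hl w hw => ?_⟩
    obtain ⟨i, hit, hiw⟩ := Set.mem_iUnion₂.mp (ht hw)
    rw [Metric.mem_ball, dist_eq_norm] at hiw
    have ha := hN k hk i hit
    have hb := hN l hl i hit
    have lipk := hlipS _ (hF (φ k)) w (u i)
    have lipl := hlipS _ (hF (φ l)) (u i) w
    have hle : L * ‖w - u i‖ ≤ L * ε' := mul_le_mul_of_nonneg_left hiw.le hLpos.le
    have hle2 : L * ‖u i - w‖ ≤ L * ε' := by rw [norm_sub_rev]; exact hle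
    have t1 : |F (φ k) w - F (φ l) w| ≤
        |F (φ k) w - F (φ k) (u i)| + |F (φ k) (u i) - F (φ l) (u i)| +
          |F (φ l) (u i) - F (φ l) w| := by
      have a1 := abs_sub_le (F (φ k) w) (F (φ k) (u i)) (F (φ l) w)
      have a2 := abs_sub_le (F (φ k) (u i)) (F (φ l) (u i)) (F (φ l) w)
      linarith
    have t2 : |F (φ k) (u i) - F (φ l) (u i)| ≤ ε' := by
      have a3 := abs_sub_le (F (φ k) (u i)) (x i) (F (φ l) (u i))
      have a4 : |x i - F (φ l) (u i)| = |F (φ l) (u i) - x i| := abs_sub_comm _ _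
      linarith
    have hsum' : |F (φ k) w - F (φ l) w| ≤ (2 * L + 1) * ε' := by linarith
    have hfin : (2 * L + 1) * ε' = ε := by
      rw [hε']
      field_simp
    linarith
  -- pointwise limits everywhere
  have hex : ∀ v : V, ∃ y : ℝ, Tendsto (fun k => F (φ k) v) atTop (nhds y) := by
    intro v
    rcases eq_or_ne v 0 with rfl | hv
    · refine ⟨0, ?_⟩
      have hz : (fun k => F (φ k) (0:V)) = fun _ => (0:ℝ) :=
        funext fun k => (hS _ (hF _)).zero
      rw [hz]
      exact tendsto_const_nhds
    · obtain ⟨a, ha0, h1, h2⟩ := hscale v hv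
      have hwB : a • v ∈ Metric.closedBall (0:V) 1 := mem_closedBall_zero_iff.2 h2
      have hcw : CauchySeq (fun k => F (φ k) (a • v)) := by
        rw [Metric.cauchySeq_iff]
        intro ε hε
        obtain ⟨N, hN⟩ := hUC (ε / 2) (half_pos hε)
        refine ⟨N, fun m hm n hn => ?_⟩
        rw [Real.dist_eq]
        exact lt_of_le_of_lt (hN m hm n hn _ hwB) (by linarith)
      obtain ⟨y, hy⟩ := cauchySeq_tendsto_of_complete hcw
      refine ⟨‖a‖⁻¹ * y, ?_⟩
      have h3 := hy.const_mul ‖a‖⁻¹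
      have hna : ‖a‖ ≠ 0 := norm_ne_zero_iff.2 ha0
      have heq : (fun k => ‖a‖⁻¹ * F (φ k) (a • v)) = fun k => F (φ k) v := by
        funext k
        rw [(hS _ (hF _)).2.1 a v, inv_mul_cancel_left₀ hna]
      rwa [heq] at h3
  choose g htend using hex
  have hglo : ∀ w : V, w ≠ 0 → Real.exp (-C) * f₀ w ≤ g w := fun w hw =>
    ge_of_tendsto (htend w) (Eventually.of_forall fun k => (hboundS _ (hF _) w hw).1)
  have hgpos : ∀ v : V, v ≠ 0 → 0 < g v := fun v hv =>
    lt_of_lt_of_le (mul_pos (Real.exp_pos _) (hf₀.pos hv)) (hglo v hv)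
  have gnorm : IsVNorm K g := limit_is_norm (fun k => hS _ (hF _)) htend hgpos
  -- uniform convergence to g on the ball
  have hUB : ∀ ε : ℝ, 0 < ε → ∃ N, ∀ k, N ≤ k →
      ∀ w ∈ Metric.closedBall (0:V) 1, |F (φ k) w - g w| ≤ ε := by
    intro ε hε
    obtain ⟨N, hN⟩ := hUC ε hε
    refine ⟨N, fun k hk w hw => ?_⟩
    have hconv2 : Tendsto (fun l => |F (φ k) w - F (φ l) w|) atTop
        (nhds |F (φ k) w - g w|) := ((tendsto_const_nhds (x := F (φ k) w)).sub (htend w)).abs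
    exact le_of_tendsto hconv2 (eventually_atTop.2 ⟨N, fun l hl => hN k hk l hl w hw⟩)
  set δ : ℝ := Real.exp (-C) * (m₀ * ‖c‖⁻¹) with hδdef
  have hδ : 0 < δ := mul_pos (Real.exp_pos _) (mul_pos hm₀ (inv_pos.2 hc0))
  have hfloor : ∀ p : V → ℝ, (∀ y : V, y ≠ 0 → Real.exp (-C) * f₀ y ≤ p y) →
      ∀ w : V, ‖c‖⁻¹ ≤ ‖w‖ → δ ≤ p w := by
    intro p hp w hw
    have hw0 : w ≠ 0 := by
      intro h
      rw [h, norm_zero] at hw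
      exact absurd hw (not_le.2 (inv_pos.2 hc0))
    have h1 : m₀ * ‖w‖ ≤ f₀ w := hm₀b w
    have h2 : m₀ * ‖c‖⁻¹ ≤ m₀ * ‖w‖ := mul_le_mul_of_nonneg_left hw hm₀.le
    calc δ = Real.exp (-C) * (m₀ * ‖c‖⁻¹) := rfl
      _ ≤ Real.exp (-C) * f₀ w :=
          mul_le_mul_of_nonneg_left (le_trans h2 h1) (Real.exp_pos _).le
      _ ≤ p w := hp w hw0
  have hge : ∀ k, 0 ≤ dGI (F (φ k)) g := fun k =>
    le_trans (abs_nonneg _) (le_ciSup (hpair _ _ (hS _ (hF _)) gnorm) ⟨v₀, hv₀⟩)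
  have hdGI0 : Tendsto (fun k => dGI (F (φ k)) g) atTop (nhds 0) := by
    refine tendsto_order.2 ⟨fun a ha => Eventually.of_forall fun k =>
      lt_of_lt_of_le ha (hge k), fun a ha => ?_⟩
    obtain ⟨N, hN⟩ := hUB (δ * (a / 2)) (mul_pos hδ (by linarith))
    refine eventually_atTop.2 ⟨N, fun k hk => ?_⟩
    have hsup : dGI (F (φ k)) g ≤ a / 2 := by
      refine ciSup_le fun v => ?_
      obtain ⟨s, hs0, h1, h2⟩ := hscale v.1 v.2
      have hwB : s • v.1 ∈ Metric.closedBall (0:V) 1 := mem_closedBall_zero_iff.2 h2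
      have hFv : 0 < F (φ k) v.1 := (hS _ (hF _)).pos v.2
      have hgv : 0 < g v.1 := hgpos _ v.2
      have hns : ‖s‖ ≠ 0 := norm_ne_zero_iff.2 hs0
      have hFw : F (φ k) (s • v.1) = ‖s‖ * F (φ k) v.1 := (hS _ (hF _)).2.1 s v.1
      have hgw : g (s • v.1) = ‖s‖ * g v.1 := gnorm.2.1 s v.1
      have heq : Real.log (F (φ k) v.1) - Real.log (g v.1) =
          Real.log (F (φ k) (s • v.1)) - Real.log (g (s • v.1)) := by
        rw [hFw, hgw, Real.log_mul hns hFv.ne', Real.log_mul hns hgv.ne']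
        ring
      rw [show |Real.log (F (φ k) v.1) - Real.log (g v.1)| =
        |Real.log (F (φ k) (s • v.1)) - Real.log (g (s • v.1))| by rw [heq]]
      have hdF : δ ≤ F (φ k) (s • v.1) :=
        hfloor _ (fun y hy => (hboundS _ (hF _) y hy).1) _ h1.le
      have hdg : δ ≤ g (s • v.1) := hfloor _ hglo _ h1.le
      calc |Real.log (F (φ k) (s • v.1)) - Real.log (g (s • v.1))|
          ≤ |F (φ k) (s • v.1) - g (s • v.1)| / δ := abs_log_sub_log_le hδ hdF hdg
        _ ≤ (δ * (a / 2)) / δ := by gcongr; exact hN k hk _ hwB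
        _ = a / 2 := by rw [mul_comm, mul_div_assoc, div_self hδ.ne', mul_one]
    exact lt_of_le_of_lt hsup (by linarith)
  exact conclude S hS hclosed F hF φ hφ g htend hgpos hdGI0

section finitecase
variable {K : Type*} [NormedField K] {V : Type*} [AddCommGroup V] [Module K V]

theorem finite_case [Finite V]
    (S : Set (V → ℝ)) (hS : ∀ f ∈ S, IsVNorm K f) (f₀ : V → ℝ) (hf₀ : IsVNorm K f₀) (C : ℝ)
    (hbdd : ∀ f ∈ S, dGI f f₀ ≤ C)
    (hclosed : ∀ g : V → ℝ, IsVNorm K g →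
      (∀ ε : ℝ, 0 < ε → ∃ f ∈ S, dGI f g < ε) → g ∈ S)
    (F : ℕ → V → ℝ) (hF : ∀ n, F n ∈ S) (v₀ : V) (hv₀ : v₀ ≠ 0) :
    ∃ g ∈ S, ∃ ψ : ℕ → ℕ, StrictMono ψ ∧
      Tendsto (fun n => dGI (F (ψ n)) g) atTop (nhds 0) := by
  classical
  haveI : Nonempty {v : V // v ≠ 0} := ⟨⟨v₀, hv₀⟩⟩
  have hBdd : ∀ p q : V → ℝ,
      BddAbove (Set.range fun v : {v : V // v ≠ 0} => |log (p v) - log (q v)|) :=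
    fun p q => (Set.finite_range _).bddAbove
  have hbox : ∀ f ∈ S, ∀ v : {v : V // v ≠ 0},
      f v.1 ∈ Icc (exp (-C) * f₀ v.1) (exp C * f₀ v.1) := by
    intro f hf v
    have h := le_trans (le_ciSup (hBdd f f₀) v) (hbdd f hf)
    have hfv := (hS f hf).pos v.2
    have hf₀v := hf₀.pos v.2
    obtain ⟨ha, hb⟩ := abs_le.mp h
    constructor
    · have h2 : f₀ v.1 ≤ exp C * f v.1 := le_exp_mul_of_log_sub_le hf₀v hfv (by linarith)
      have h3 : exp (-C) * f₀ v.1 ≤ exp (-C) * (exp C * f v.1) :=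
        mul_le_mul_of_nonneg_left h2 (exp_pos _).le
      calc exp (-C) * f₀ v.1 ≤ exp (-C) * (exp C * f v.1) := h3
        _ = f v.1 := by rw [← mul_assoc, ← Real.exp_add]; simp
    · exact le_exp_mul_of_log_sub_le hfv hf₀v hb
  have hcpt : IsCompact (Set.pi Set.univ
      fun v : {v : V // v ≠ 0} => Icc (exp (-C) * f₀ v.1) (exp C * f₀ v.1)) :=
    isCompact_univ_pi fun v => isCompact_Icc
  obtain ⟨x, hx, φ, hφ, hconv⟩ := hcpt.tendsto_subseq
    (x := fun k => fun v : {v : V // v ≠ 0} => F k v.1)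
    (fun k => Set.mem_univ_pi.2 fun v => hbox _ (hF k) v)
  have hptc : ∀ v : {v : V // v ≠ 0}, Tendsto (fun k => F (φ k) v.1) atTop (nhds (x v)) :=
    tendsto_pi_nhds.mp hconv
  set g : V → ℝ := fun v => if h : v = 0 then 0 else x ⟨v, h⟩ with hg
  have htend : ∀ v, Tendsto (fun k => F (φ k) v) atTop (nhds (g v)) := by
    intro v
    by_cases h : v = 0
    · subst h
      have hz : (fun k => F (φ k) (0 : V)) = fun _ => (0 : ℝ) :=
        funext fun k => (hS _ (hF _)).zero
      rw [hz]
      simp only [hg, dif_pos rfl]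
      exact tendsto_const_nhds
    · simpa only [hg, dif_neg h] using hptc ⟨v, h⟩
  have hpos : ∀ v : V, v ≠ 0 → 0 < g v := by
    intro v h
    have hxm := (Set.mem_univ_pi.mp hx ⟨v, h⟩).1
    have h0 : 0 < exp (-C) * f₀ v := mul_pos (exp_pos _) (hf₀.pos h)
    have : g v = x ⟨v, h⟩ := by simp only [hg, dif_neg h]
    rw [this]
    exact lt_of_lt_of_le h0 hxm
  have hterm : ∀ v : {v : V // v ≠ 0},
      Tendsto (fun k => |log (F (φ k) v.1) - log (g v.1)|) atTop (nhds 0) := by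
    intro v
    have hgv : 0 < g v.1 := hpos _ v.2
    have h1 : Tendsto (fun k => log (F (φ k) v.1)) atTop (nhds (log (g v.1))) :=
      (Real.continuousAt_log hgv.ne').tendsto.comp (htend v.1)
    have h2 := (h1.sub (tendsto_const_nhds (x := log (g v.1)))).abs
    simpa using h2
  have hge : ∀ k, 0 ≤ dGI (F (φ k)) g :=
    fun k => le_trans (abs_nonneg _) (le_ciSup (hBdd _ _) ⟨v₀, hv₀⟩)
  have hdGI : Tendsto (fun k => dGI (F (φ k)) g) atTop (nhds 0) := by
    refine tendsto_order.2 ⟨fun a ha => Eventually.of_forall fun k => lt_of_lt_of_le ha (hge k),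
      fun a ha => ?_⟩
    have hev : ∀ᶠ k in atTop, ∀ v : {v : V // v ≠ 0},
        |log (F (φ k) v.1) - log (g v.1)| < a / 2 :=
      eventually_all.2 fun v => (hterm v).eventually_lt_const (by linarith)
    filter_upwards [hev] with k hk
    calc dGI (F (φ k)) g ≤ a / 2 := ciSup_le fun v => (hk v).le
      _ < a := by linarith
  exact conclude S hS hclosed F hF φ hφ g htend hpos hdGI

end finitecase

/-- If the closed unit ball of `K` is compact (`K` local), then every closed bounded
subset of the space of norms `N(V)` with the Goldman–Iwahori metric is (sequentially)
compact. -/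
theorem closed_bounded_subset_of_norms_compact
    {K V : Type*} [NormedField K] [CompleteSpace K]
    [AddCommGroup V] [Module K V] [FiniteDimensional K V]
    (hK : IsCompact {x : K | ‖x‖ ≤ 1})
    (S : Set (V → ℝ)) (hS : ∀ f ∈ S, IsVNorm K f)
    (f₀ : V → ℝ) (hf₀ : IsVNorm K f₀) (C : ℝ)
    (hbdd : ∀ f ∈ S, dGI f f₀ ≤ C)
    (hclosed : ∀ g : V → ℝ, IsVNorm K g →
      (∀ ε : ℝ, 0 < ε → ∃ f ∈ S, dGI f g < ε) → g ∈ S) :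
    ∀ F : ℕ → (V → ℝ), (∀ n, F n ∈ S) →
      ∃ g ∈ S, ∃ φ : ℕ → ℕ, StrictMono φ ∧
        Filter.Tendsto (fun n => dGI (F (φ n)) g) Filter.atTop (nhds 0) := by
  intro F hF
  by_cases hV : ∀ v : V, v = 0
  · haveI : IsEmpty {v : V // v ≠ 0} := ⟨fun v => v.2 (hV v.1)⟩
    refine ⟨F 0, hF 0, id, strictMono_id, ?_⟩
    have hz : (fun n => dGI (F (id n)) (F 0)) = fun _ => (0:ℝ) := by
      funext n
      exact Real.iSup_of_isEmpty _
    rw [hz]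
    exact tendsto_const_nhds
  · push_neg at hV
    obtain ⟨v₀, hv₀⟩ := hV
    by_cases hk : ∃ c : K, 1 < ‖c‖
    · obtain ⟨c, hc⟩ := hk
      exact main_case hK c hc S hS f₀ hf₀ C hbdd hclosed F hF v₀ hv₀
    · have h1 : ∀ a : K, a ≠ 0 → ‖a‖ = 1 := by
        intro a ha
        push_neg at hk
        have h1 := hk a
        have h2 := hk a⁻¹
        have h3 : ‖a‖ * ‖a⁻¹‖ = 1 := by rw [← norm_mul, mul_inv_cancel₀ ha, norm_one]
        have h5 : ‖a‖ * ‖a⁻¹‖ ≤ ‖a‖ * 1 := mul_le_mul_of_nonneg_left h2 (norm_nonneg a)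
        rw [mul_one] at h5
        linarith
      haveI : Finite K := by
        have hball : ∀ x : K, Metric.ball x 1 ⊆ {x} := by
          intro x y hy
          simp only [Metric.mem_ball, dist_eq_norm] at hy
          have : y - x = 0 := by
            by_contra h
            rw [h1 _ h] at hy; exact lt_irrefl 1 hy
          simp [sub_eq_zero.mp this]
        have huniv : {x : K | ‖x‖ ≤ 1} = Set.univ := by
          ext x; simp only [Set.mem_setOf_eq, Set.mem_univ, iff_true]
          rcases eq_or_ne x 0 with h | h
          · simp [h]
          · exact (h1 x h).le
        rw [huniv] at hK
        obtain ⟨t, ht⟩ := hK.elim_finite_subcover (fun x : K => Metric.ball x 1)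
          (fun x => Metric.isOpen_ball)
          (fun x _ => Set.mem_iUnion.2 ⟨x, Metric.mem_ball_self one_pos⟩)
        have hsub : (Set.univ : Set K) ⊆ ↑t := by
          intro x hx
          obtain ⟨y, hy, hmem⟩ := Set.mem_iUnion₂.mp (ht hx)
          have := hball y hmem
          simp only [Set.mem_singleton_iff] at this
          rwa [this]
        exact Set.finite_univ_iff.mp (t.finite_toSet.subset hsub)
      haveI : Finite V := Finite.of_equiv _ (Module.finBasis K V).equivFun.toEquiv.symm
      exact finite_case S hS f₀ hf₀ C hbdd hclosed F hF v₀ hv₀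
end

section
/- Hadamard-type equality for diagonalizable non-Archimedean norms: if ‖·‖ is a diagonalizable norm on V, a basis (e_i) satisfies det‖e₁∧⋯∧e_N‖ = ∏_i‖e_i‖ if and only if (e_i) is an orthogonal basis for ‖·‖. -/
def IsOrthBasis {K V : Type*} [NormedField K] [AddCommGroup V] [Module K V] {N : ℕ}
    (f : V → ℝ) (B : Module.Basis (Fin N) K V) : Prop :=
  ∀ α : Fin N → K, f (∑ i, α i • B i) = ⨆ i, ‖α i‖ * f (B i)

noncomputable def detNorm (K : Type*) {V : Type*} [NormedField K] [AddCommGroup V]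
    [Module K V] (N : ℕ) (f : V → ℝ) (τ : ExteriorAlgebra K V) : ℝ :=
  sInf {x : ℝ | ∃ v : Fin N → V, ExteriorAlgebra.ιMulti K N v = τ ∧ x = ∏ i, f (v i)}

section Aux

variable {K V : Type*} [NormedField K] [AddCommGroup V] [Module K V] {N : ℕ}

lemma vnorm_zero {f : V → ℝ} (hf : IsVNorm K f) : f 0 = 0 := by
  have h := hf.2.1 (0 : K) 0
  simpa using h

lemma vnorm_neg {f : V → ℝ} (hf : IsVNorm K f) (v : V) : f (-v) = f v := by
  have h := hf.2.1 (-1 : K) v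
  simpa using h

lemma vnorm_pos {f : V → ℝ} (hf : IsVNorm K f) {v : V} (hv : v ≠ 0) : 0 < f v :=
  lt_of_le_of_ne (hf.1 v) (fun h => hv (hf.2.2.2 v h.symm))

/-- The `AddGroupSeminorm` associated to a vector norm. -/
noncomputable def IsVNorm.toSeminorm {f : V → ℝ} (hf : IsVNorm K f) : AddGroupSeminorm V where
  toFun := f
  map_zero' := vnorm_zero hf
  add_le' := hf.2.2.1
  neg' := vnorm_neg hf

lemma vnorm_repr {f : V → ℝ} (hf : IsVNorm K f) {C : Module.Basis (Fin N) K V}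
    (hC : IsOrthBasis f C) (u : V) : f u = ⨆ i, ‖C.repr u i‖ * f (C i) := by
  have h := hC (fun i => C.repr u i)
  rwa [C.sum_repr u] at h

lemma vnorm_isNonarchimedean {f : V → ℝ} (hf : IsVNorm K f)
    (hna : IsNonarchimedean (fun x : K => ‖x‖))
    {C : Module.Basis (Fin N) K V} (hC : IsOrthBasis f C) : IsNonarchimedean f := by
  intro v w
  rcases isEmpty_or_nonempty (Fin N) with hE | hNE
  · rw [vnorm_repr hf hC (v + w), Real.iSup_of_isEmpty]
    exact le_max_of_le_left (hf.1 v)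
  · rw [vnorm_repr hf hC (v + w)]
    apply ciSup_le
    intro i
    have hbv : BddAbove (Set.range fun i => ‖C.repr v i‖ * f (C i)) :=
      Set.Finite.bddAbove (Set.finite_range _)
    have hbw : BddAbove (Set.range fun i => ‖C.repr w i‖ * f (C i)) :=
      Set.Finite.bddAbove (Set.finite_range _)
    have h1 : ‖C.repr (v + w) i‖ * f (C i) ≤
        max (‖C.repr v i‖ * f (C i)) (‖C.repr w i‖ * f (C i)) := by
      rw [map_add]
      calc ‖C.repr v i + C.repr w i‖ * f (C i)
          ≤ max ‖C.repr v i‖ ‖C.repr w i‖ * f (C i) :=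
            mul_le_mul_of_nonneg_right (hna _ _) (hf.1 _)
        _ = max (‖C.repr v i‖ * f (C i)) (‖C.repr w i‖ * f (C i)) :=
            max_mul_of_nonneg _ _ (hf.1 _)
    refine h1.trans (max_le_max ?_ ?_)
    · rw [vnorm_repr hf hC v]; exact le_ciSup hbv i
    · rw [vnorm_repr hf hC w]; exact le_ciSup hbw i

/-- Hadamard inequality for an orthogonal basis. -/
lemma prod_le_of_wedge_eq [FiniteDimensional K V]
    (hna : IsNonarchimedean (fun x : K => ‖x‖)) {f : V → ℝ} (hf : IsVNorm K f)
    {B : Module.Basis (Fin N) K V} (hB : IsOrthBasis f B) (v : Fin N → V)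
    (hv : ExteriorAlgebra.ιMulti K N v = ExteriorAlgebra.ιMulti K N (fun i => B i)) :
    ∏ i, f (B i) ≤ ∏ i, f (v i) := by
  classical
  -- the change-of-basis matrix has determinant 1
  have hdet : B.det v = 1 := by
    set F : ∀ i : ℕ, V [⋀^Fin i]→ₗ[K] K := Function.update (fun _ => 0) N B.det with hF
    have h1 := ExteriorAlgebra.liftAlternating_apply_ιMulti (R := K) (M := V) (N := K) F v
    have h2 := ExteriorAlgebra.liftAlternating_apply_ιMulti (R := K) (M := V) (N := K) F
      (fun i => B i)
    rw [hv, h2] at h1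
    have hFN : F N = B.det := by rw [hF, Function.update_self]
    rw [hFN] at h1
    have hBB : B.det (fun i => B i) = 1 := B.det_self
    rw [hBB] at h1
    exact h1.symm
  set M := B.toMatrix v with hM
  have hdM : M.det = 1 := by rw [hM, ← B.det_apply]; exact hdet
  -- pick a permutation witnessing the nonarchimedean bound on the determinant
  obtain ⟨σ, hσ⟩ : ∃ σ : Equiv.Perm (Fin N), (1 : ℝ) ≤ ∏ i, ‖M (σ i) i‖ := by
    set sK : AddGroupSeminorm K :=
      ⟨fun x => ‖x‖, norm_zero, norm_add_le, norm_neg⟩ with hsK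
    have hna' : IsNonarchimedean sK := hna
    obtain ⟨σ, -, hb⟩ := IsNonarchimedean.finset_image_add (map_zero sK) (fun x => norm_nonneg x) hna'
      (fun σ : Equiv.Perm (Fin N) => Equiv.Perm.sign σ • ∏ i, M (σ i) i) Finset.univ
    refine ⟨σ, ?_⟩
    rw [← Matrix.det_apply, hdM] at hb
    have hb' : ‖(1 : K)‖ ≤ ‖Equiv.Perm.sign σ • ∏ i, M (σ i) i‖ := hb
    rw [norm_one] at hb'
    have hsign : ‖Equiv.Perm.sign σ • ∏ i, M (σ i) i‖ = ‖∏ i, M (σ i) i‖ := by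
      rcases Int.units_eq_one_or (Equiv.Perm.sign σ) with h | h <;> rw [h] <;>
        simp [Units.smul_def]
    rw [hsign, norm_prod] at hb'
    exact hb'
  have hfv : ∀ j, f (v j) = ⨆ i, ‖M i j‖ * f (B i) := by
    intro j
    have h := hB (fun i => M i j)
    have hsum : (∑ i, M i j • B i) = v j := by
      simp only [hM, Module.Basis.toMatrix_apply]
      exact B.sum_repr (v j)
    rwa [hsum] at h
  calc ∏ i, f (B i) = 1 * ∏ i, f (B (σ i)) := by
        rw [one_mul, Equiv.prod_comp σ (fun i => f (B i))]
    _ ≤ (∏ i, ‖M (σ i) i‖) * ∏ i, f (B (σ i)) :=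
        mul_le_mul_of_nonneg_right hσ (Finset.prod_nonneg fun i _ => hf.1 _)
    _ = ∏ i, ‖M (σ i) i‖ * f (B (σ i)) := (Finset.prod_mul_distrib).symm
    _ ≤ ∏ i, f (v i) := by
        refine Finset.prod_le_prod (fun i _ => mul_nonneg (norm_nonneg _) (hf.1 _))
          (fun i _ => ?_)
        rw [hfv i]
        exact le_ciSup (f := fun k => ‖M k i‖ * f (B k))
          (Set.Finite.bddAbove (Set.finite_range _)) (σ i)

end Aux

/-- Hadamard-type equality: for a diagonalizable non-Archimedean norm `f`, a basis
`(e i)` satisfies `det‖e₁ ∧ ⋯ ∧ e_N‖ = ∏ f (e i)` iff it is orthogonal for `f`. -/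
theorem detNorm_eq_prod_iff_orthogonal
    {K V : Type*} [NormedField K] [CompleteSpace K]
    [AddCommGroup V] [Module K V] [FiniteDimensional K V] {N : ℕ}
    (hna : IsNonarchimedean (fun x : K => ‖x‖))
    (hdim : Module.finrank K V = N)
    (f : V → ℝ) (hf : IsVNorm K f)
    (hdiag : ∃ B : Module.Basis (Fin N) K V, IsOrthBasis f B)
    (B : Module.Basis (Fin N) K V) :
    detNorm K N f (ExteriorAlgebra.ιMulti K N (fun i => B i)) = ∏ i, f (B i) ↔
      IsOrthBasis f B := by
  classical
  set S := {x : ℝ | ∃ v : Fin N → V,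
      ExteriorAlgebra.ιMulti K N v = ExteriorAlgebra.ιMulti K N (fun i => B i) ∧
      x = ∏ i, f (v i)} with hSdef
  have hmem : (∏ i, f (B i)) ∈ S := ⟨fun i => B i, rfl, rfl⟩
  have hbddS : BddBelow S := by
    refine ⟨0, ?_⟩
    rintro x ⟨v, -, rfl⟩
    exact Finset.prod_nonneg fun i _ => hf.1 _
  have hgoal : detNorm K N f (ExteriorAlgebra.ιMulti K N (fun i => B i)) = sInf S := rfl
  rw [hgoal]
  constructor
  · -- equality implies orthogonality
    intro heq α
    rcases isEmpty_or_nonempty (Fin N) with hE | hNE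
    · rw [Finset.univ_eq_empty, Finset.sum_empty, vnorm_zero hf, Real.iSup_of_isEmpty]
    by_contra hne
    obtain ⟨C, hC⟩ := hdiag
    have hfna : IsNonarchimedean f := vnorm_isNonarchimedean hf hna hC
    have hbdd : BddAbove (Set.range fun i => ‖α i‖ * f (B i)) :=
      Set.Finite.bddAbove (Set.finite_range _)
    have hub : f (∑ i, α i • B i) ≤ ⨆ i, ‖α i‖ * f (B i) := by
      have hna'' : IsNonarchimedean hf.toSeminorm := hfna
      obtain ⟨b, -, hb⟩ := IsNonarchimedean.finset_image_add (map_zero hf.toSeminorm) (fun x => hf.1 x) hna''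
        (fun i => α i • B i) Finset.univ
      calc f (∑ i, α i • B i) ≤ f (α b • B b) := hb
        _ = ‖α b‖ * f (B b) := hf.2.1 _ _
        _ ≤ ⨆ i, ‖α i‖ * f (B i) := le_ciSup hbdd b
    obtain ⟨j, hj⟩ : ∃ j, (⨆ i, ‖α i‖ * f (B i)) = ‖α j‖ * f (B j) := by
      obtain ⟨j, hj⟩ := Finite.exists_max (fun i => ‖α i‖ * f (B i))
      exact ⟨j, le_antisymm (ciSup_le hj) (le_ciSup hbdd j)⟩
    have hlt : f (∑ i, α i • B i) < ‖α j‖ * f (B j) := by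
      rw [← hj]; exact lt_of_le_of_ne hub hne
    have hαj : α j ≠ 0 := by
      intro h
      rw [h, norm_zero, zero_mul] at hlt
      exact absurd hlt (not_lt.2 (hf.1 _))
    have hαjpos : (0 : ℝ) < ‖α j‖ := norm_pos_iff.2 hαj
    set w := (α j)⁻¹ • ∑ i, α i • B i with hw
    have hfw : f w < f (B j) := by
      rw [hw, hf.2.1, norm_inv]
      calc ‖α j‖⁻¹ * f (∑ i, α i • B i) < ‖α j‖⁻¹ * (‖α j‖ * f (B j)) :=
            mul_lt_mul_of_pos_left hlt (inv_pos.2 hαjpos)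
        _ = f (B j) := by field_simp
    have hwedge : ExteriorAlgebra.ιMulti K N (Function.update (fun i => B i) j w)
        = ExteriorAlgebra.ιMulti K N (fun i => B i) := by
      have hw2 : w = ∑ i, ((α j)⁻¹ * α i) • B i := by
        rw [hw, Finset.smul_sum]
        simp [smul_smul]
      rw [hw2, AlternatingMap.map_update_sum]
      rw [Finset.sum_eq_single j]
      · rw [AlternatingMap.map_update_smul, inv_mul_cancel₀ hαj, one_smul,
          Function.update_eq_self]
      · intro i _ hij
        rw [AlternatingMap.map_update_smul]
        have h0 : (ExteriorAlgebra.ιMulti K N)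
            (Function.update (fun k => B k) j ((fun k => B k) i)) = 0 :=
          AlternatingMap.map_update_self _ _ (Ne.symm hij)
        rw [show (B i : V) = (fun k => B k) i from rfl, h0, smul_zero]
      · intro h
        exact absurd (Finset.mem_univ j) h
    set x := ∏ i, f (Function.update (fun i => B i) j w i) with hx
    have hxmem : x ∈ S := ⟨Function.update (fun i => B i) j w, hwedge, rfl⟩
    have hxlt : x < ∏ i, f (B i) := by
      have hcomp : (fun i => f (Function.update (fun i => B i) j w i)) =
          Function.update (fun i => f (B i)) j (f w) := by
        funext i
        exact congrFun (Function.comp_update f (fun i => B i) j w) i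
      rw [hx]
      calc ∏ i, f (Function.update (fun i => B i) j w i)
          = ∏ i, Function.update (fun i => f (B i)) j (f w) i := by rw [hcomp]
        _ = f w * ∏ i ∈ Finset.univ \ {j}, f (B i) :=
            Finset.prod_update_of_mem (Finset.mem_univ j) _ _
        _ = f w * ∏ i ∈ Finset.univ.erase j, f (B i) := by
            rw [Finset.sdiff_singleton_eq_erase]
        _ < f (B j) * ∏ i ∈ Finset.univ.erase j, f (B i) := by
            refine mul_lt_mul_of_pos_right hfw ?_
            exact Finset.prod_pos fun i _ => vnorm_pos hf (B.ne_zero i)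
        _ = ∏ i, f (B i) :=
            Finset.mul_prod_erase Finset.univ (fun i => f (B i)) (Finset.mem_univ j)
    have hle : sInf S ≤ x := csInf_le hbddS hxmem
    rw [heq] at hle
    exact absurd (lt_of_le_of_lt hle hxlt) (lt_irrefl _)
  · -- orthogonality implies equality
    intro hB
    apply le_antisymm (csInf_le hbddS hmem)
    apply le_csInf ⟨_, hmem⟩
    rintro x ⟨v, hv, rfl⟩
    exact prod_le_of_wedge_eq hna hf hB v hv
end
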